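/- In Blanchet's flawed simple Denning–Sacco protocol, the shape analysis sentence of Figure 5 does not entail the authentication goal ∀a,b,s,d,z₀ (resp₂-complete hypotheses with non(a⁻¹), non(b⁻¹), uniq(s) ⊃ ∃z₁. init_{1,b}(z₁,b)): there exists a skeleton (the shape k₁ with initiator using key b' ≠ b) that satisfies the shape analysis sentence but falsifies the goal. -/
import Mathlib


/-- Ground messages: asymmetric keys (in inverse pairs indexed by a Boolean),
symmetric keys, data, pairing, encryption. -/
inductive GMsg : Type
  | akey : ℕ → Bool → GMsg
  | skey : ℕ → GMsg
  | data : ℕ → GMsg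
  | pair : GMsg → GMsg → GMsg
  | enc : GMsg → GMsg → GMsg

/-- Key inverse: swaps the two members of an asymmetric key pair; symmetric
keys are self-inverse. -/
def GMsg.inv : GMsg → GMsg
  | .akey n b => .akey n (!b)
  | m => m

/-- Carried-by. -/
inductive Carries : GMsg → GMsg → Prop
  | refl (t : GMsg) : Carries t t
  | pairL (t₀ t₁ : GMsg) : Carries t₀ (GMsg.pair t₀ t₁)
  | pairR (t₀ t₁ : GMsg) : Carries t₁ (GMsg.pair t₀ t₁)
  | enc (t₀ t₁ : GMsg) : Carries t₀ (GMsg.enc t₀ t₁)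
  | trans {t₀ t₁ t₂ : GMsg} : Carries t₀ t₁ → Carries t₁ t₂ → Carries t₀ t₂

/-- Ground events. -/
inductive GEvent : Type
  | send : GMsg → GEvent
  | recv : GMsg → GEvent

def GEvent.msg : GEvent → GMsg
  | .send m => m
  | .recv m => m

/-- Role messages: variables, pairing, encryption, key inverse. -/
inductive RMsg : Type
  | var : ℕ → RMsg
  | pair : RMsg → RMsg → RMsg
  | enc : RMsg → RMsg → RMsg
  | inv : RMsg → RMsg

/-- Instantiate a role message with a substitution. -/
def rsubst (τ : ℕ → GMsg) : RMsg → GMsg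
  | .var v => τ v
  | .pair a b => .pair (rsubst τ a) (rsubst τ b)
  | .enc a b => .enc (rsubst τ a) (rsubst τ b)
  | .inv a => (rsubst τ a).inv

/-- Role events. -/
inductive REvent : Type
  | send : RMsg → REvent
  | recv : RMsg → REvent

instance : Inhabited REvent := ⟨.send (.var 0)⟩

/-- Instantiate a role event. -/
def REvent.inst (τ : ℕ → GMsg) : REvent → GEvent
  | .send m => .send (rsubst τ m)
  | .recv m => .recv (rsubst τ m)

/-- A (ground) skeleton. -/
structure Skeleton where
  numStrands : ℕ
  height : ℕ → ℕ
  evt : ℕ × ℕ → GEvent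
  prec : ℕ × ℕ → ℕ × ℕ → Prop
  nonOrig : Set GMsg
  uniq : Set GMsg

def Skeleton.IsNode (k : Skeleton) (n : ℕ × ℕ) : Prop :=
  n.1 < k.numStrands ∧ n.2 < k.height n.1

/-- `t` originates at node `n` of `k`. -/
def Skeleton.OrigAt (k : Skeleton) (t : GMsg) (n : ℕ × ℕ) : Prop :=
  k.IsNode n ∧ (∃ m, k.evt n = .send m ∧ Carries t m) ∧
    ∀ j < n.2, ¬ Carries t (k.evt (n.1, j)).msg

/-- Semantics of the strand progress predicate `P[r,h,x](s, m)`. -/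
def SatProgress (k : Skeleton) (r : List REvent) (h x s : ℕ) (m : GMsg) : Prop :=
  s < k.numStrands ∧ h ≤ k.height s ∧
    ∃ τ : ℕ → GMsg, τ x = m ∧
      ∀ i < h, k.evt (s, i) = (r.getD i default).inst τ

/-- Role variables: 0 = a, 1 = b, 2 = s, 3 = d. -/
def initRole : List REvent :=
  [.send (.enc (.enc (.var 2) (.inv (.var 0))) (.var 1)),
   .recv (.enc (.var 3) (.var 2))]

def respRole : List REvent :=
  [.recv (.enc (.enc (.var 2) (.inv (.var 0))) (.var 1)),
   .send (.enc (.var 3) (.var 2))]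

/-- The concrete atoms of the shape `k₁`. -/
def A : GMsg := .akey 0 true
def Ai : GMsg := .akey 0 false
def B : GMsg := .akey 1 true
def Bi : GMsg := .akey 1 false
def B' : GMsg := .akey 2 true
def S : GMsg := .skey 0
def D : GMsg := .data 0

/-- The shape `k₁` of Figure 3: a full responder strand (strand 0) with
parameters `(a, b, s, d)` and an initiator strand (strand 1) of height 1 with
parameters `(a, b', s)`, ordering `(1,0) ≺ (0,0)` (and strand succession),
non-origination `{a⁻¹, b⁻¹}`, unique origination `{s}`. -/
def k₁ : Skeleton where
  numStrands := 2
  height := fun s => if s = 0 then 2 else if s = 1 then 1 else 0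
  evt := fun n =>
    if n = (0, 0) then .recv (.enc (.enc S Ai) B)
    else if n = (0, 1) then .send (.enc D S)
    else if n = (1, 0) then .send (.enc (.enc S Ai) B')
    else .recv S
  prec := fun n m => (n = (1, 0) ∧ m = (0, 0)) ∨ (n = (0, 0) ∧ m = (0, 1)) ∨
    (n = (1, 0) ∧ m = (0, 1))
  nonOrig := {Ai, Bi}
  uniq := {S}

/-- The authentication goal: if a responder runs to completion with
uncompromised `a⁻¹`, `b⁻¹` and fresh `s`, then some initiator strand of
height 1 uses `b` for its outer encryption. -/
def GoalAt (k : Skeleton) : Prop :=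
  ∀ (a b : ℕ × Bool) (s d : ℕ) (z₀ : ℕ),
    SatProgress k respRole 2 0 z₀ (.akey a.1 a.2) →
    SatProgress k respRole 2 1 z₀ (.akey b.1 b.2) →
    SatProgress k respRole 2 2 z₀ (.skey s) →
    SatProgress k respRole 2 3 z₀ (.data d) →
    GMsg.inv (.akey a.1 a.2) ∈ k.nonOrig →
    GMsg.inv (.akey b.1 b.2) ∈ k.nonOrig →
    GMsg.skey s ∈ k.uniq →
    ∃ z₁ : ℕ, SatProgress k initRole 1 1 z₁ (.akey b.1 b.2)

/-- The shape analysis sentence of Figure 5, interpreted in skeleton `k`.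
Sorted quantifiers: asymmetric keys range over `ℕ × Bool`, symmetric keys and
data over `ℕ`, strands over `ℕ`. -/
def SigmaAt (k : Skeleton) : Prop :=
  ∀ (a₀ b₀ : ℕ × Bool) (s₀ d₀ : ℕ) (z₀ : ℕ),
    SatProgress k respRole 2 0 z₀ (.akey a₀.1 a₀.2) →
    SatProgress k respRole 2 1 z₀ (.akey b₀.1 b₀.2) →
    SatProgress k respRole 2 2 z₀ (.skey s₀) →
    SatProgress k respRole 2 3 z₀ (.data d₀) →
    GMsg.inv (.akey a₀.1 a₀.2) ∈ k.nonOrig →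
    GMsg.inv (.akey b₀.1 b₀.2) ∈ k.nonOrig →
    GMsg.skey s₀ ∈ k.uniq →
    ∃ (a₁ b₁ b₂ : ℕ × Bool) (s₁ d₁ : ℕ) (z₁ z₂ : ℕ),
      z₀ = z₁ ∧ a₀ = a₁ ∧ b₀ = b₁ ∧ s₀ = s₁ ∧ d₀ = d₁ ∧
      SatProgress k respRole 2 0 z₁ (.akey a₁.1 a₁.2) ∧
      SatProgress k respRole 2 1 z₁ (.akey b₁.1 b₁.2) ∧
      SatProgress k respRole 2 2 z₁ (.skey s₁) ∧
      SatProgress k respRole 2 3 z₁ (.data d₁) ∧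
      SatProgress k initRole 1 0 z₂ (.akey a₁.1 a₁.2) ∧
      SatProgress k initRole 1 1 z₂ (.akey b₂.1 b₂.2) ∧
      SatProgress k initRole 1 2 z₂ (.skey s₁) ∧
      (GMsg.skey s₁ ∈ k.uniq ∧ k.OrigAt (.skey s₁) (z₂, 0)) ∧
      k.prec (z₂, 0) (z₁, 0) ∧
      GMsg.inv (.akey a₁.1 a₁.2) ∈ k.nonOrig ∧
      GMsg.inv (.akey b₁.1 b₁.2) ∈ k.nonOrig ∧
      GMsg.skey s₁ ∈ k.uniq

/-- The canonical substitution for strand 0 (responder). -/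
def τ₀ : ℕ → GMsg := fun v => if v = 0 then A else if v = 1 then B else if v = 2 then S else D

/-- The canonical substitution for strand 1 (initiator, with `b'`). -/
def τ₁ : ℕ → GMsg := fun v => if v = 0 then A else if v = 1 then B' else if v = 2 then S else D

lemma resp_extract {x z : ℕ} {m : GMsg} (h : SatProgress k₁ respRole 2 x z m) :
    z = 0 ∧ ∃ τ : ℕ → GMsg, τ x = m ∧
      (τ 0).inv = Ai ∧ τ 1 = B ∧ τ 2 = S ∧ τ 3 = D := by
  obtain ⟨hz, hh, τ, hτx, hτ⟩ := h
  simp only [k₁] at hz hh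
  have hz0 : z = 0 := by interval_cases z <;> simp_all
  subst hz0
  have h0 := hτ 0 (by norm_num)
  have h1 := hτ 1 (by norm_num)
  simp [k₁, respRole, REvent.inst, rsubst, GEvent.recv.injEq, GEvent.send.injEq,
    GMsg.enc.injEq] at h0 h1
  exact ⟨rfl, τ, hτx, h0.1.2.symm, h0.2.symm, h0.1.1.symm, h1.1.symm⟩

lemma init1_sat : SatProgress k₁ initRole 1 0 1 A ∧
    SatProgress k₁ initRole 1 1 1 B' ∧ SatProgress k₁ initRole 1 2 1 S := by
  refine ⟨⟨by norm_num [k₁], by norm_num [k₁], τ₁, rfl, ?_⟩,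
          ⟨by norm_num [k₁], by norm_num [k₁], τ₁, rfl, ?_⟩,
          ⟨by norm_num [k₁], by norm_num [k₁], τ₁, rfl, ?_⟩⟩ <;>
    (intro i hi; interval_cases i; rfl)

lemma resp0_sat : SatProgress k₁ respRole 2 0 0 A ∧
    SatProgress k₁ respRole 2 1 0 B ∧ SatProgress k₁ respRole 2 2 0 S ∧
    SatProgress k₁ respRole 2 3 0 D := by
  refine ⟨⟨by norm_num [k₁], by norm_num [k₁], τ₀, rfl, ?_⟩,
          ⟨by norm_num [k₁], by norm_num [k₁], τ₀, rfl, ?_⟩,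
          ⟨by norm_num [k₁], by norm_num [k₁], τ₀, rfl, ?_⟩,
          ⟨by norm_num [k₁], by norm_num [k₁], τ₀, rfl, ?_⟩⟩ <;>
    (intro i hi; interval_cases i <;> rfl)

/-- The shape analysis sentence does not entail the authentication goal:
the shape `k₁` (initiator using `b' ≠ b`) satisfies the sentence but
falsifies the goal. -/
theorem shape_sentence_does_not_entail_goal : SigmaAt k₁ ∧ ¬ GoalAt k₁ := by
  constructor
  · intro a₀ b₀ s₀ d₀ z₀ h1 h2 h3 h4 hna hnb hu
    obtain ⟨hz0, τ, hτ0, hinv, -, -, -⟩ := resp_extract h1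
    obtain ⟨-, τ', hτ2, -, -, hτS, -⟩ := resp_extract h3
    subst hz0
    rw [hτ0] at hinv
    simp only [GMsg.inv, Ai, GMsg.akey.injEq, Bool.not_eq_false'] at hinv
    have ha : GMsg.akey a₀.1 a₀.2 = A := by
      rw [hinv.1, hinv.2]; rfl
    have hs : GMsg.skey s₀ = S := hτ2.symm.trans hτS
    obtain ⟨i0, i1, i2⟩ := init1_sat
    refine ⟨a₀, b₀, (2, true), s₀, d₀, 0, 1, rfl, rfl, rfl, rfl, rfl,
      h1, h2, h3, h4, ?_, ?_, ?_, ⟨hu, ?_⟩, ?_, hna, hnb, hu⟩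
    · rwa [ha]
    · exact i1
    · rwa [hs]
    · refine ⟨⟨by norm_num [k₁], by norm_num [k₁]⟩,
        ⟨GMsg.enc (.enc S Ai) B', by norm_num [k₁], ?_⟩, ?_⟩
      · rw [hs]
        exact Carries.trans (Carries.enc S Ai) (Carries.enc _ B')
      · intro j hj; omega
    · left; exact ⟨rfl, rfl⟩
  · intro h
    obtain ⟨r0, r1, r2, r3⟩ := resp0_sat
    obtain ⟨z₁, hz, hh, τ, hτ1, hall⟩ :=
      h (0, true) (1, true) 0 0 0 r0 r1 r2 r3
        (by simp [k₁, GMsg.inv, Ai]) (by simp [k₁, GMsg.inv, Bi, B])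
        (by simp [k₁, S])
    simp only [k₁] at hz hh
    have he := hall 0 (by norm_num)
    simp [initRole, REvent.inst, rsubst] at he
    interval_cases z₁ <;>
      simp_all [k₁, GEvent.send.injEq, GEvent.recv.injEq, GMsg.enc.injEq, A, B, B', S, Ai]
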